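/- arXiv:2412.02296 — 2 statements merged into one kernel-verified Lean document; each statement's English description precedes it below -/
import Mathlib

section
/- Let n ≥ 3, let 0 < ν₀ < (n−2)/2 and set α = ν₀ − (n−2)/2 < 0. Let χ : (0,∞) → [0,1] be a smooth function supported in [1/2, 1] with ∫₀^∞ χ(ρ) dρ > 0. For t ∈ ℝ and r > 0 define Z(t,r) = ∫₀^∞ (rρ)^{−(n−2)/2} J_{ν₀}(rρ) e^{itρ²} χ(ρ) ρ^{n−1} dρ. Then for every finite exponent p with p ≥ −n/α and every t ∈ [0, 1/4], the spatial integral ∫₀^1 |Z(t,r)|^p r^{n−1} dr is infinite. In particular, for every q ∈ [1,∞) the mixed space-time norm (∫_ℝ (∫₀^∞ |Z(t,r)|^p r^{n−1} dr)^{q/p} dt)^{1/q} is infinite, so the Strichartz estimate at this exponent fails; this proves the necessity of the restriction p < p(α) = n/|α| in Theorem 1.2. -/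
open MeasureTheory Filter

/-- The Bessel function of order `ν > -1/2`, via the Poisson integral representation:
`J_ν(r) = (r/2)^ν / (Γ(ν+1/2)Γ(1/2)) ∫_{-1}^1 e^{isr} (1-s²)^{(2ν-1)/2} ds`. -/
noncomputable def besselJ (ν r : ℝ) : ℂ :=
  ((((r / 2) ^ ν / (Real.Gamma (ν + 1 / 2) * Real.Gamma (1 / 2)) : ℝ)) : ℂ) *
    ∫ s in (-1 : ℝ)..1, Complex.exp (Complex.I * s * r) * (((1 - s ^ 2) ^ ((2 * ν - 1) / 2) : ℝ) : ℂ)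

open scoped ENNReal
open Set intervalIntegral
set_option maxHeartbeats 1000000

lemma aux_w_meas {β : ℝ} : Measurable fun s : ℝ => (1 - s ^ 2) ^ β := by
  fun_prop

lemma aux_w_intable {β : ℝ} (hβ : -1 < β) :
    IntegrableOn (fun s : ℝ => (1 - s ^ 2) ^ β) (Set.Ioc (-1 : ℝ) 1) := by
  set M : ℝ := max 1 ((2:ℝ) ^ β) with hM
  have hMbound : ∀ u : ℝ, 1 ≤ u → u ≤ 2 → u ^ β ≤ M := by
    intro u h1 h2
    rcases le_or_gt 0 β with hβ0 | hβ0
    · exact le_trans (Real.rpow_le_rpow (by linarith) h2 hβ0) (le_max_right _ _)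
    · exact le_trans (Real.rpow_le_one_of_one_le_of_nonpos h1 hβ0.le) (le_max_left _ _)
  have hright : IntegrableOn (fun s : ℝ => (1 - s ^ 2) ^ β) (Set.Ioc (0:ℝ) 1) := by
    have hbase : IntervalIntegrable (fun x : ℝ => (1 - x) ^ β) volume 0 1 := by
      have := (intervalIntegrable_rpow' (a := 0) (b := 1) hβ).comp_sub_left 1
      norm_num at this
      exact this.symm
    refine Integrable.mono' (hbase.1.const_mul M) aux_w_meas.aestronglyMeasurable ?_
    filter_upwards [ae_restrict_mem measurableSet_Ioc] with s hs
    have hs0 : 0 < s := hs.1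
    have hs1 : s ≤ 1 := hs.2
    have h1 : (0:ℝ) ≤ 1 - s := by linarith
    have h2 : (0:ℝ) ≤ 1 + s := by linarith
    have hfac : (1 - s ^ 2 : ℝ) = (1 - s) * (1 + s) := by ring
    have hnn : (0:ℝ) ≤ (1 - s ^ 2) ^ β := Real.rpow_nonneg (by nlinarith) _
    rw [Real.norm_of_nonneg hnn, hfac, Real.mul_rpow h1 h2]
    calc (1 - s) ^ β * (1 + s) ^ β ≤ (1 - s) ^ β * M :=
          mul_le_mul_of_nonneg_left (hMbound _ (by linarith) (by linarith))
            (Real.rpow_nonneg h1 _)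
      _ = M * (1 - s) ^ β := by ring
  have hleft : IntegrableOn (fun s : ℝ => (1 - s ^ 2) ^ β) (Set.Ioc (-1:ℝ) 0) := by
    have hbase : IntervalIntegrable (fun x : ℝ => (x + 1) ^ β) volume (-1) 0 := by
      have := (intervalIntegrable_rpow' (a := 0) (b := 1) hβ).comp_sub_right (-1)
      norm_num at this
      simpa [sub_neg_eq_add] using this
    refine Integrable.mono' (hbase.1.const_mul M) aux_w_meas.aestronglyMeasurable ?_
    filter_upwards [ae_restrict_mem measurableSet_Ioc] with s hs
    have hs0 : -1 < s := hs.1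
    have hs1 : s ≤ 0 := hs.2
    have h1 : (0:ℝ) ≤ 1 - s := by linarith
    have h2 : (0:ℝ) ≤ 1 + s := by linarith
    have hfac : (1 - s ^ 2 : ℝ) = (1 - s) * (1 + s) := by ring
    have hnn : (0:ℝ) ≤ (1 - s ^ 2) ^ β := Real.rpow_nonneg (by nlinarith) _
    rw [Real.norm_of_nonneg hnn, hfac, Real.mul_rpow h1 h2]
    calc (1 - s) ^ β * (1 + s) ^ β ≤ M * (1 + s) ^ β :=
          mul_le_mul_of_nonneg_right (hMbound _ (by linarith) (by linarith))
            (Real.rpow_nonneg h2 _)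
      _ = M * (s + 1) ^ β := by ring_nf
  have hunion := hleft.union hright
  rwa [Set.Ioc_union_Ioc_eq_Ioc (by norm_num : (-1:ℝ) ≤ 0) (by norm_num : (0:ℝ) ≤ 1)] at hunion

lemma aux_w_ii {β : ℝ} (hβ : -1 < β) :
    IntervalIntegrable (fun s : ℝ => (1 - s ^ 2) ^ β) volume (-1) 1 :=
  ⟨aux_w_intable hβ, by rw [Set.Ioc_eq_empty (by norm_num)]; exact integrableOn_empty⟩

lemma aux_w_pos {β : ℝ} (hβ : -1 < β) :
    0 < ∫ s in (-1:ℝ)..1, (1 - s ^ 2) ^ β := by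
  refine intervalIntegral.intervalIntegral_pos_of_pos_on (aux_w_ii hβ) ?_ (by norm_num)
  intro s hs
  exact Real.rpow_pos_of_pos (by nlinarith [hs.1, hs.2]) _

lemma aux_beta {ν : ℝ} (hν : 0 < ν) : -1 < (2 * ν - 1) / 2 := by linarith

lemma besselJ_continuous {ν : ℝ} (hν : 0 < ν) : Continuous (besselJ ν) := by
  unfold besselJ
  have hβ := aux_beta hν
  apply Continuous.mul
  · apply Complex.continuous_ofReal.comp
    apply Continuous.div_const
    have h1 : Continuous fun r : ℝ => r / 2 := continuous_id.div_const 2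
    have h2 : Continuous fun x : ℝ => x ^ ν := by
      rw [continuous_iff_continuousAt]
      exact fun x => Real.continuousAt_rpow_const x ν (Or.inr hν.le)
    exact h2.comp h1
  · apply intervalIntegral.continuous_of_dominated_interval
      (bound := fun s : ℝ => |(1 - s ^ 2) ^ ((2 * ν - 1) / 2)|)
    · intro x
      apply Measurable.aestronglyMeasurable
      apply Measurable.mul
      · exact (Complex.measurable_exp.comp (by fun_prop))
      · exact Complex.measurable_ofReal.comp aux_w_meas
    · intro x
      filter_upwards with s _
      rw [norm_mul]
      have : ‖Complex.exp (Complex.I * s * x)‖ = 1 := by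
        rw [Complex.norm_exp]
        simp [Complex.mul_re, Complex.I_re, Complex.I_im]
      rw [this, one_mul, Complex.norm_real, Real.norm_eq_abs]
    · exact (aux_w_ii hβ).abs
    · filter_upwards with s _
      apply Continuous.mul _ continuous_const
      exact Complex.continuous_exp.comp
        ((continuous_const.mul continuous_const).mul Complex.continuous_ofReal)

lemma besselJ_re_lower {ν x τ : ℝ} (hν : 0 < ν) (hx : 0 < x) (hx1 : x ≤ 1)
    (hτ : 0 ≤ τ) (hτ' : τ ≤ 1 / 4) :
    Real.cos (5 / 4) * (∫ s in (-1:ℝ)..1, (1 - s ^ 2) ^ ((2 * ν - 1) / 2)) *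
      ((x / 2) ^ ν / (Real.Gamma (ν + 1 / 2) * Real.Gamma (1 / 2))) ≤
      (besselJ ν x * Complex.exp (Complex.I * (τ : ℂ))).re := by
  have hβ := aux_beta hν
  set β := (2 * ν - 1) / 2 with hβdef
  set w : ℝ → ℝ := fun s => (1 - s ^ 2) ^ β with hw
  set c : ℝ := (x / 2) ^ ν / (Real.Gamma (ν + 1 / 2) * Real.Gamma (1 / 2)) with hc
  have hcnn : 0 ≤ c := by
    apply div_nonneg (Real.rpow_nonneg (by linarith) _)
    exact le_of_lt (mul_pos (Real.Gamma_pos_of_pos (by linarith))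
      (Real.Gamma_pos_of_pos (by norm_num)))
  -- rewrite the product as c * ∫ exp((sx+τ)I) w(s) ds
  have hmul : besselJ ν x * Complex.exp (Complex.I * (τ : ℂ)) =
      (c : ℂ) * ∫ s in (-1:ℝ)..1, Complex.exp ((↑(s * x + τ) : ℂ) * Complex.I) * (w s : ℂ) := by
    unfold besselJ
    rw [mul_assoc, ← intervalIntegral.integral_mul_const]
    congr 1
    apply intervalIntegral.integral_congr
    intro s _
    show Complex.exp (Complex.I * s * x) * ((w s : ℝ) : ℂ) * Complex.exp (Complex.I * (τ:ℂ)) =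
      Complex.exp ((↑(s * x + τ) : ℂ) * Complex.I) * (w s : ℂ)
    rw [show ((↑(s * x + τ) : ℂ) * Complex.I) = Complex.I * s * x + Complex.I * τ by
      push_cast; ring, Complex.exp_add]
    ring
  -- integrability of the complex integrand
  have hgint : IntegrableOn
      (fun s : ℝ => Complex.exp ((↑(s * x + τ) : ℂ) * Complex.I) * (w s : ℂ))
      (Set.Ioc (-1:ℝ) 1) := by
    refine Integrable.mono' (aux_w_intable hβ).abs ?_ ?_
    · apply Measurable.aestronglyMeasurable
      exact (Complex.measurable_exp.comp (by fun_prop)).mul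
        (Complex.measurable_ofReal.comp aux_w_meas)
    · filter_upwards with s
      rw [norm_mul]
      have : ‖Complex.exp ((↑(s * x + τ) : ℂ) * Complex.I)‖ = 1 := by
        rw [Complex.norm_exp]
        simp [Complex.mul_re, Complex.I_re, Complex.I_im]
      rw [this, one_mul, Complex.norm_real, Real.norm_eq_abs]
  -- real part of the integral
  have hre : (∫ s in (-1:ℝ)..1,
        Complex.exp ((↑(s * x + τ) : ℂ) * Complex.I) * (w s : ℂ)).re =
      ∫ s in (-1:ℝ)..1, Real.cos (s * x + τ) * w s := by
    rw [intervalIntegral.integral_of_le (by norm_num : (-1:ℝ) ≤ 1),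
        intervalIntegral.integral_of_le (by norm_num : (-1:ℝ) ≤ 1)]
    rw [show (∫ s in Set.Ioc (-1:ℝ) 1, Complex.exp ((↑(s * x + τ) : ℂ) * Complex.I) * (w s : ℂ)).re
        = ∫ s in Set.Ioc (-1:ℝ) 1, RCLike.re (Complex.exp ((↑(s * x + τ) : ℂ) * Complex.I) * (w s : ℂ))
        from (integral_re hgint).symm]
    apply MeasureTheory.integral_congr_ae
    filter_upwards with s
    show RCLike.re (Complex.exp ((↑(s * x + τ) : ℂ) * Complex.I) * ((w s : ℝ) : ℂ)) =
      Real.cos (s * x + τ) * w s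
    rw [RCLike.re_to_complex, Complex.mul_re, Complex.ofReal_re, Complex.ofReal_im,
      Complex.exp_ofReal_mul_I_re, mul_zero, sub_zero]
  -- lower bound for the cosine integral
  have hwnn : ∀ s ∈ Set.Icc (-1:ℝ) 1, 0 ≤ w s := by
    intro s hs
    exact Real.rpow_nonneg (by nlinarith [hs.1, hs.2]) _
  have hcosI : IntervalIntegrable (fun s => Real.cos (s * x + τ) * w s) volume (-1) 1 := by
    constructor
    · refine Integrable.mono' (aux_w_intable hβ).abs ?_ ?_
      · exact ((Real.continuous_cos.comp (by continuity)).measurable.mul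
          aux_w_meas).aestronglyMeasurable
      · filter_upwards with s
        rw [Real.norm_eq_abs, abs_mul]
        calc |Real.cos (s * x + τ)| * |w s| ≤ 1 * |w s| :=
              mul_le_mul_of_nonneg_right (Real.abs_cos_le_one _) (abs_nonneg _)
          _ = |w s| := one_mul _
    · rw [Set.Ioc_eq_empty (by norm_num)]; exact integrableOn_empty
  have hmono : Real.cos (5 / 4) * (∫ s in (-1:ℝ)..1, w s) ≤
      ∫ s in (-1:ℝ)..1, Real.cos (s * x + τ) * w s := by
    rw [← intervalIntegral.integral_const_mul]
    apply intervalIntegral.integral_mono_on (by norm_num) ((aux_w_ii hβ).const_mul _) hcosI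
    intro s hs
    have hsw := hwnn s hs
    have habs : |s * x + τ| ≤ 5 / 4 := by
      have h1 : |s * x + τ| ≤ |s| * |x| + |τ| := by
        calc |s * x + τ| ≤ |s * x| + |τ| := abs_add_le _ _
          _ = |s| * |x| + |τ| := by rw [abs_mul]
      have hs1 : |s| ≤ 1 := abs_le.mpr ⟨hs.1, hs.2⟩
      have hx1' : |x| ≤ 1 := abs_le.mpr ⟨by linarith, hx1⟩
      have hτ1 : |τ| ≤ 1 / 4 := abs_le.mpr ⟨by linarith, hτ'⟩
      nlinarith [abs_nonneg s, abs_nonneg x]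
    have hcos : Real.cos (5 / 4) ≤ Real.cos (s * x + τ) := by
      rw [← Real.cos_abs (s * x + τ)]
      exact Real.cos_le_cos_of_nonneg_of_le_pi (abs_nonneg _)
        (by linarith [Real.pi_gt_three]) habs
    exact mul_le_mul_of_nonneg_right hcos hsw
  -- put it together
  rw [hmul, Complex.re_ofReal_mul, hre]
  calc Real.cos (5 / 4) * (∫ s in (-1:ℝ)..1, w s) * c
      = c * (Real.cos (5 / 4) * ∫ s in (-1:ℝ)..1, w s) := by ring
    _ ≤ c * ∫ s in (-1:ℝ)..1, Real.cos (s * x + τ) * w s :=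
        mul_le_mul_of_nonneg_left hmono hcnn

/-- Failure of the Strichartz estimates for `p ≥ p(α) = -n/α`:
for the lowest-angular-mode solution
`Z(t,r) = ∫₀^∞ (rρ)^{−(n−2)/2} J_{ν₀}(rρ) e^{itρ²} χ(ρ) ρ^{n−1} dρ`,
with `0 < ν₀ < (n-2)/2` and `α = ν₀ - (n-2)/2 < 0`, the spatial integral
`∫₀^1 |Z(t,r)|^p r^{n−1} dr` is infinite for every `t ∈ [0,1/4]` and `p ≥ -n/α`,
and hence the mixed space-time norm is infinite for every `q ∈ [1,∞)`. -/
theorem strichartz_counterexample (n : ℕ) (hn : 3 ≤ n)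
    (ν₀ : ℝ) (hν₀ : 0 < ν₀) (hν₀' : ν₀ < ((n : ℝ) - 2) / 2)
    (α : ℝ) (hα : α = ν₀ - ((n : ℝ) - 2) / 2)
    (χ : ℝ → ℝ) (hχsmooth : ContDiff ℝ (⊤ : ℕ∞) χ)
    (hχ0 : ∀ ρ, 0 ≤ χ ρ) (hχ1 : ∀ ρ, χ ρ ≤ 1)
    (hχsupp : Function.support χ ⊆ Set.Icc (1 / 2) 1)
    (hχpos : 0 < ∫ ρ in Set.Ioi (0 : ℝ), χ ρ)
    (Z : ℝ → ℝ → ℂ)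
    (hZ : ∀ t r, Z t r = ∫ ρ in Set.Ioi (0 : ℝ),
      (((r * ρ) ^ (-(((n : ℝ) - 2) / 2)) : ℝ) : ℂ) * besselJ ν₀ (r * ρ) *
        Complex.exp (Complex.I * (t : ℂ) * (ρ : ℂ) ^ 2) * ((χ ρ : ℝ) : ℂ) *
        ((ρ ^ ((n : ℝ) - 1) : ℝ) : ℂ)) :
    (∀ p : ℝ, -(n : ℝ) / α ≤ p → ∀ t ∈ Set.Icc (0 : ℝ) (1 / 4),
      ∫⁻ r in Set.Ioc (0 : ℝ) 1,
        ENNReal.ofReal (‖Z t r‖ ^ p * r ^ ((n : ℝ) - 1)) = ⊤) ∧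
    (∀ p : ℝ, -(n : ℝ) / α ≤ p → ∀ q : ℝ, 1 ≤ q →
      (∫⁻ t : ℝ, (∫⁻ r in Set.Ioi (0 : ℝ),
          ENNReal.ofReal (‖Z t r‖ ^ p * r ^ ((n : ℝ) - 1))) ^ (q / p)) ^ (1 / q)
        = ⊤) := by
  have hn3 : (3:ℝ) ≤ (n:ℝ) := by exact_mod_cast hn
  have hαneg : α < 0 := by rw [hα]; linarith
  have hβ : -1 < (2 * ν₀ - 1) / 2 := by linarith
  set W := ∫ s in (-1:ℝ)..1, (1 - s ^ 2) ^ ((2 * ν₀ - 1) / 2) with hWdef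
  have hW : 0 < W := aux_w_pos hβ
  set G := Real.Gamma (ν₀ + 1 / 2) * Real.Gamma (1 / 2) with hGdef
  have hG : 0 < G :=
    mul_pos (Real.Gamma_pos_of_pos (by linarith)) (Real.Gamma_pos_of_pos (by norm_num))
  have hcos : 0 < Real.cos (5 / 4) := Real.cos_pos_of_mem_Ioo
    ⟨by linarith [Real.pi_gt_three], by linarith [Real.pi_gt_three]⟩
  set K : ℝ := Real.cos (5 / 4) * W / G * (2:ℝ) ^ (-ν₀) * (1/2:ℝ) ^ ((n:ℝ) - 1) with hKdef
  have hK : 0 < K := by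
    apply mul_pos
      (mul_pos (div_pos (mul_pos hcos hW) hG) (Real.rpow_pos_of_pos two_pos _))
    exact Real.rpow_pos_of_pos (by norm_num) _
  have hχcont := hχsmooth.continuous
  have hχcs : HasCompactSupport χ :=
    HasCompactSupport.intro isCompact_Icc (fun x hx => by
      by_contra h; exact hx (hχsupp h))
  have hχint : Integrable χ := hχcont.integrable_of_hasCompactSupport hχcs
  set C : ℝ := K * ∫ ρ in Set.Ioi (0:ℝ), χ ρ with hCdef
  have hC : 0 < C := mul_pos hK hχpos
  -- key pointwise lower bound
  have hkey : ∀ t ∈ Set.Icc (0:ℝ) (1/4), ∀ r ∈ Set.Ioc (0:ℝ) 1,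
      C * r ^ α ≤ ‖Z t r‖ := by
    rintro t ⟨ht0, ht1⟩ r ⟨hr0, hr1⟩
    set F : ℝ → ℂ := fun ρ =>
      (((r * ρ) ^ (-(((n : ℝ) - 2) / 2)) : ℝ) : ℂ) * besselJ ν₀ (r * ρ) *
        Complex.exp (Complex.I * (t : ℂ) * (ρ : ℂ) ^ 2) * ((χ ρ : ℝ) : ℂ) *
        ((ρ ^ ((n : ℝ) - 1) : ℝ) : ℂ) with hFdef
    have hZr : Z t r = ∫ ρ in Set.Ioi (0:ℝ), F ρ := hZ t r
    have hFsupp : Function.support F ⊆ Set.Icc (1/2 : ℝ) 1 := by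
      intro ρ hρ
      by_contra h
      have hχρ : χ ρ = 0 := by
        by_contra h'
        exact h (hχsupp h')
      exact hρ (by simp [hFdef, hχρ])
    have hFcont : ContinuousOn F (Set.Icc (1/2:ℝ) 1) := by
      have h1 : ContinuousOn (fun ρ : ℝ => (((r * ρ) ^ (-(((n : ℝ) - 2) / 2)) : ℝ) : ℂ))
          (Set.Icc (1/2:ℝ) 1) := by
        apply Complex.continuous_ofReal.comp_continuousOn
        apply ContinuousOn.rpow_const (continuous_const.mul continuous_id).continuousOn
        intro ρ hρ
        exact Or.inl (ne_of_gt (mul_pos hr0 (lt_of_lt_of_le (by norm_num) hρ.1)))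
      have h2 : ContinuousOn (fun ρ : ℝ => besselJ ν₀ (r * ρ)) (Set.Icc (1/2:ℝ) 1) :=
        ((besselJ_continuous hν₀).comp (continuous_const.mul continuous_id)).continuousOn
      have h3 : ContinuousOn (fun ρ : ℝ => Complex.exp (Complex.I * (t : ℂ) * (ρ : ℂ) ^ 2))
          (Set.Icc (1/2:ℝ) 1) :=
        (Complex.continuous_exp.comp
          (continuous_const.mul (Complex.continuous_ofReal.pow 2))).continuousOn
      have h4 : ContinuousOn (fun ρ : ℝ => ((χ ρ : ℝ) : ℂ)) (Set.Icc (1/2:ℝ) 1) :=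
        (Complex.continuous_ofReal.comp hχcont).continuousOn
      have h5 : ContinuousOn (fun ρ : ℝ => ((ρ ^ ((n : ℝ) - 1) : ℝ) : ℂ))
          (Set.Icc (1/2:ℝ) 1) :=
        (Complex.continuous_ofReal.comp
          (Real.continuous_rpow_const (by linarith))).continuousOn
      exact (((h1.mul h2).mul h3).mul h4).mul h5
    have hFint : Integrable F := by
      rw [← integrableOn_iff_integrable_of_support_subset hFsupp]
      exact hFcont.integrableOn_Icc
    have hpt : ∀ ρ ∈ Set.Ioi (0:ℝ), K * r ^ α * χ ρ ≤ (F ρ).re := by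
      intro ρ hρpos
      rcases eq_or_ne (χ ρ) 0 with hχρ | hχρ
      · simp [hFdef, hχρ]
      have hρm : ρ ∈ Set.Icc (1/2 : ℝ) 1 := hχsupp hχρ
      obtain ⟨hρ1, hρ2⟩ := hρm
      have hρ0 : (0:ℝ) < ρ := lt_of_lt_of_le (by norm_num) hρ1
      have hx0 : 0 < r * ρ := mul_pos hr0 hρ0
      have hx1 : r * ρ ≤ 1 := by nlinarith
      have hτ0 : 0 ≤ t * ρ ^ 2 := mul_nonneg ht0 (sq_nonneg ρ)
      have hτ1 : t * ρ ^ 2 ≤ 1/4 := by nlinarith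
      have hbes := besselJ_re_lower hν₀ hx0 hx1 hτ0 hτ1
      rw [← hWdef, ← hGdef] at hbes
      have hFre : (F ρ).re =
          ((r * ρ) ^ (-(((n:ℝ)-2)/2)) * χ ρ * ρ ^ ((n:ℝ)-1)) *
            (besselJ ν₀ (r * ρ) * Complex.exp (Complex.I * ((t * ρ ^ 2 : ℝ) : ℂ))).re := by
        rw [← Complex.re_ofReal_mul]
        congr 1
        show F ρ = _
        rw [hFdef]
        push_cast
        ring
      rw [hFre]
      have hA : 0 ≤ (r * ρ) ^ (-(((n:ℝ)-2)/2)) * χ ρ * ρ ^ ((n:ℝ)-1) :=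
        mul_nonneg (mul_nonneg (Real.rpow_nonneg hx0.le _) (hχ0 ρ)) (Real.rpow_nonneg hρ0.le _)
      have hXY : (r * ρ) ^ (-(((n:ℝ)-2)/2)) * (r * ρ) ^ ν₀ = r ^ α * ρ ^ α := by
        rw [← Real.rpow_add hx0, show -(((n:ℝ)-2)/2) + ν₀ = α by rw [hα]; ring,
          Real.mul_rpow hr0.le hρ0.le]
      have e1 : ((r * ρ) / 2) ^ ν₀ = (r * ρ) ^ ν₀ * (2:ℝ) ^ (-ν₀) := by
        rw [Real.div_rpow hx0.le (by norm_num), Real.rpow_neg (by norm_num), div_eq_mul_inv]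
      have key2 : (1/2:ℝ) ^ ((n:ℝ)-1) * r ^ α ≤ ρ ^ ((n:ℝ)-1) * (r ^ α * ρ ^ α) := by
        have b1 : (1/2:ℝ) ^ ((n:ℝ)-1) ≤ ρ ^ ((n:ℝ)-1) :=
          Real.rpow_le_rpow (by norm_num) hρ1 (by linarith)
        have b2 : (1:ℝ) ≤ ρ ^ α :=
          Real.one_le_rpow_of_pos_of_le_one_of_nonpos hρ0 hρ2 hαneg.le
        have hrα : 0 < r ^ α := Real.rpow_pos_of_pos hr0 _
        have b3 : r ^ α ≤ r ^ α * ρ ^ α := by nlinarith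
        exact mul_le_mul b1 b3 hrα.le (Real.rpow_nonneg hρ0.le _)
      calc K * r ^ α * χ ρ
          = (χ ρ * (Real.cos (5/4) * W / G) * (2:ℝ) ^ (-ν₀)) *
              ((1/2:ℝ) ^ ((n:ℝ)-1) * r ^ α) := by rw [hKdef]; ring
        _ ≤ (χ ρ * (Real.cos (5/4) * W / G) * (2:ℝ) ^ (-ν₀)) *
              (ρ ^ ((n:ℝ)-1) * (r ^ α * ρ ^ α)) := by
            apply mul_le_mul_of_nonneg_left key2
            exact mul_nonneg (mul_nonneg (hχ0 ρ) (le_of_lt (div_pos (mul_pos hcos hW) hG)))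
              (Real.rpow_nonneg (by norm_num) _)
        _ = ((r * ρ) ^ (-(((n:ℝ)-2)/2)) * χ ρ * ρ ^ ((n:ℝ)-1)) *
              (Real.cos (5/4) * W * (((r * ρ) / 2) ^ ν₀ / G)) := by
            rw [e1, ← hXY]
            ring
        _ ≤ ((r * ρ) ^ (-(((n:ℝ)-2)/2)) * χ ρ * ρ ^ ((n:ℝ)-1)) *
              (besselJ ν₀ (r * ρ) * Complex.exp (Complex.I * ((t * ρ ^ 2 : ℝ) : ℂ))).re :=
            mul_le_mul_of_nonneg_left hbes hA
    have hZre : (Z t r).re = ∫ ρ in Set.Ioi (0:ℝ), (F ρ).re := by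
      rw [hZr]
      have := integral_re (μ := volume.restrict (Set.Ioi (0:ℝ))) hFint.integrableOn
      simpa [RCLike.re_to_complex] using this.symm
    have hmono := MeasureTheory.setIntegral_mono_on
      ((hχint.const_mul (K * r ^ α)).integrableOn)
      (hFint.integrableOn.re) measurableSet_Ioi (fun ρ hρ => hpt ρ hρ)
    calc C * r ^ α = K * r ^ α * ∫ ρ in Set.Ioi (0:ℝ), χ ρ := by rw [hCdef]; ring
      _ = ∫ ρ in Set.Ioi (0:ℝ), K * r ^ α * χ ρ := by
            rw [MeasureTheory.integral_const_mul]
      _ ≤ ∫ ρ in Set.Ioi (0:ℝ), (F ρ).re := hmono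
      _ = (Z t r).re := hZre.symm
      _ ≤ ‖Z t r‖ := Complex.re_le_norm _
  -- first statement
  have main1 : ∀ p : ℝ, -(n : ℝ) / α ≤ p → ∀ t ∈ Set.Icc (0 : ℝ) (1 / 4),
      ∫⁻ r in Set.Ioc (0 : ℝ) 1,
        ENNReal.ofReal (‖Z t r‖ ^ p * r ^ ((n : ℝ) - 1)) = ⊤ := by
    intro p hp t ht
    have hp0 : 0 < p :=
      lt_of_lt_of_le (div_pos_iff.mpr (Or.inr ⟨by linarith, hαneg⟩)) hp
    have hσ : α * p + ((n:ℝ) - 1) ≤ -1 := by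
      have h1 : p * α ≤ -(n:ℝ) := (div_le_iff_of_neg hαneg).mp hp
      nlinarith
    set σ : ℝ := α * p + ((n:ℝ) - 1) with hσdef
    have hdiv : ∫⁻ r in Set.Ioc (0:ℝ) 1,
        ENNReal.ofReal ((C * r ^ α) ^ p * r ^ ((n:ℝ)-1)) = ⊤ := by
      by_contra h
      have hmeas : AEStronglyMeasurable (fun r : ℝ => (C * r ^ α) ^ p * r ^ ((n:ℝ)-1))
          (volume.restrict (Set.Ioc (0:ℝ) 1)) := by
        apply Measurable.aestronglyMeasurable
        fun_prop
      have hnn : 0 ≤ᵐ[volume.restrict (Set.Ioc (0:ℝ) 1)]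
          (fun r : ℝ => (C * r ^ α) ^ p * r ^ ((n:ℝ)-1)) := by
        filter_upwards [ae_restrict_mem measurableSet_Ioc] with r hr
        have hr0 : (0:ℝ) < r := hr.1
        exact mul_nonneg (Real.rpow_nonneg (mul_nonneg hC.le (Real.rpow_nonneg hr0.le _)) _)
          (Real.rpow_nonneg hr0.le _)
      have hint := (lintegral_ofReal_ne_top_iff_integrable hmeas hnn).mp h
      have hint2 : IntegrableOn (fun r : ℝ => C ^ p * r ^ σ) (Set.Ioo (0:ℝ) 1) := by
        refine IntegrableOn.congr_fun (MeasureTheory.IntegrableOn.mono_set hint Set.Ioo_subset_Ioc_self)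
          (fun r hr => ?_) measurableSet_Ioo
        have hr0 : (0:ℝ) < r := hr.1
        show (C * r ^ α) ^ p * r ^ ((n:ℝ)-1) = C ^ p * r ^ σ
        calc (C * r ^ α) ^ p * r ^ ((n:ℝ)-1)
            = C ^ p * (r ^ α) ^ p * r ^ ((n:ℝ)-1) := by
              rw [Real.mul_rpow hC.le (Real.rpow_nonneg hr0.le _)]
          _ = C ^ p * (r ^ (α * p) * r ^ ((n:ℝ)-1)) := by
              rw [Real.rpow_mul hr0.le]; ring
          _ = C ^ p * r ^ σ := by rw [← Real.rpow_add hr0]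
      have hint3 : IntegrableOn (fun r : ℝ => r ^ σ) (Set.Ioo (0:ℝ) 1) := by
        have hCp : C ^ p ≠ 0 := ne_of_gt (Real.rpow_pos_of_pos hC _)
        refine IntegrableOn.congr_fun (hint2.const_mul ((C ^ p)⁻¹))
          (fun r hr => ?_) measurableSet_Ioo
        show (C ^ p)⁻¹ * (C ^ p * r ^ σ) = r ^ σ
        field_simp
      rw [intervalIntegral.integrableOn_Ioo_rpow_iff zero_lt_one] at hint3
      linarith
    rw [eq_top_iff, ← hdiv]
    apply lintegral_mono_ae
    filter_upwards [ae_restrict_mem measurableSet_Ioc] with r hr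
    apply ENNReal.ofReal_le_ofReal
    apply mul_le_mul_of_nonneg_right _ (Real.rpow_nonneg hr.1.le _)
    exact Real.rpow_le_rpow (mul_nonneg hC.le (Real.rpow_nonneg hr.1.le _))
      (hkey t ht r hr) hp0.le
  refine ⟨main1, ?_⟩
  intro p hp q hq
  have hp0 : 0 < p :=
    lt_of_lt_of_le (div_pos_iff.mpr (Or.inr ⟨by linarith, hαneg⟩)) hp
  have hq0 : (0:ℝ) < q := by linarith
  have hinner : ∀ t ∈ Set.Icc (0:ℝ) (1/4),
      (∫⁻ r in Set.Ioi (0:ℝ),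
        ENNReal.ofReal (‖Z t r‖ ^ p * r ^ ((n:ℝ)-1))) = ⊤ := by
    intro t ht
    rw [eq_top_iff, ← main1 p hp t ht]
    exact lintegral_mono_set Set.Ioc_subset_Ioi_self
  have houter : ∫⁻ t : ℝ, (∫⁻ r in Set.Ioi (0 : ℝ),
      ENNReal.ofReal (‖Z t r‖ ^ p * r ^ ((n : ℝ) - 1))) ^ (q / p) = ⊤ := by
    rw [eq_top_iff]
    calc (⊤:ℝ≥0∞) = ⊤ * volume (Set.Icc (0:ℝ) (1/4)) := by
          rw [Real.volume_Icc, ENNReal.top_mul (by norm_num)]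
      _ = ∫⁻ (_t : ℝ) in Set.Icc (0:ℝ) (1/4), (⊤:ℝ≥0∞) := (setLIntegral_const _ _).symm
      _ ≤ ∫⁻ t in Set.Icc (0:ℝ) (1/4), (∫⁻ r in Set.Ioi (0:ℝ),
            ENNReal.ofReal (‖Z t r‖ ^ p * r ^ ((n:ℝ)-1))) ^ (q / p) := by
          apply lintegral_mono_ae
          filter_upwards [ae_restrict_mem measurableSet_Icc] with t ht
          rw [hinner t ht, ENNReal.top_rpow_of_pos (div_pos hq0 hp0)]
      _ ≤ _ := setLIntegral_le_lintegral _ _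
  rw [houter, ENNReal.top_rpow_of_pos (by positivity)]
end

section
/- Let n ≥ 3, ν₀ > 0, c > 0 and C₀ > 0. Let (ν_k)_{k≥1} be a sequence of real numbers with ν_k ≥ ν₀ and ν_k ≥ c(1+k)^{1/(n−1)} for every k, and let (a_k)_{k≥1} be nonnegative reals with a_k ≤ C₀ (1+ν_k²)^{(n−2)/2} for every k. Then there exists a constant C depending only on n, ν₀, c, C₀ such that for all 0 < z ≤ 1, Σ_{k=1}^∞ a_k |J_{ν_k}(z)| ≤ C z^{ν₀}. -/
open MeasureTheory

open Real Set
open scoped Nat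

/-!
From the Poisson integral, `|J_ν(z)| ≤ (z/2)^ν ∫ (1-s²)^(ν-1/2) ds / (Γ(ν+1/2) Γ(1/2))`.
Since `Γ ≥ 1/6` on `(0, ∞)` and, for `ν ≥ ν₀`, the weight `(1-s²)^(ν-1/2)` is dominated by the
integrable `(1-s)^b + (1+s)^b` with `b = min ν₀ (1/2) - 1/2`, we get `|J_ν(z)| ≤ B (z/2)^ν`
uniformly in `ν ≥ ν₀`. For `z ≤ 1` the `k`-th term is then at most `C₀ B z^ν₀` times
`(1+ν_k²)^((n-2)/2) 2^(-ν_k)`, and the exponential factor beats both the polynomial weight and,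
through the Weyl bound `k² ≤ (ν_k/c)^(2(n-1))`, the factor `k²`; so the terms are
`O(z^ν₀ / k²)`.
-/

lemma inv_six_le_Gamma {t : ℝ} (ht : 0 < t) : 6⁻¹ ≤ Gamma t := by
  have one_le_Gamma_of_two_le {x : ℝ} (hx : 2 ≤ x) : 1 ≤ Gamma x :=
    Gamma_two ▸ Gamma_strictMonoOn_Ici.monotoneOn (mem_Ici.2 le_rfl) (mem_Ici.2 hx) hx
  rcases le_or_gt 2 t with h2 | h2
  · linarith [one_le_Gamma_of_two_le h2]
  · have hrec : Gamma (t + 2) = (t + 1) * t * Gamma t := by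
      rw [show t + 2 = (t + 1) + 1 by ring, Gamma_add_one (by positivity), Gamma_add_one ht.ne']
      ring
    have h1 := one_le_Gamma_of_two_le (show 2 ≤ t + 2 by linarith)
    have hprod : (t + 1) * t ≤ 6 := by nlinarith
    nlinarith [Gamma_pos_of_pos ht]

lemma intervalIntegrable_one_sub_rpow_add_one_add_rpow {b : ℝ} (hb : -1 < b) :
    IntervalIntegrable (fun s : ℝ => (1 - s) ^ b + (1 + s) ^ b) volume (-1) 1 := by
  have h := intervalIntegral.intervalIntegrable_rpow' (a := 0) (b := 2) hb
  refine IntervalIntegrable.add ?_ ?_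
  · have h₁ := (h.comp_sub_left 1).symm
    norm_num at h₁
    exact h₁
  · have h₂ := h.comp_add_left 1
    norm_num at h₂
    exact h₂

lemma one_sub_sq_rpow_le {b s : ℝ} (hb : b ≤ 0) (hs : s ∈ Ioo (-1) 1) :
    (1 - s ^ 2) ^ b ≤ (1 - s) ^ b + (1 + s) ^ b := by
  obtain ⟨hs₁, hs₂⟩ := hs
  have h₁ : 0 ≤ (1 - s) ^ b := rpow_nonneg (by linarith) _
  have h₂ : 0 ≤ (1 + s) ^ b := rpow_nonneg (by linarith) _
  rw [show 1 - s ^ 2 = (1 - s) * (1 + s) by ring, mul_rpow (by linarith) (by linarith)]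
  -- one of the two factors has base at least `1`, hence is at most `1`
  rcases le_total 0 s with hs | hs
  · nlinarith [rpow_le_one_of_one_le_of_nonpos (show 1 ≤ 1 + s by linarith) hb]
  · nlinarith [rpow_le_one_of_one_le_of_nonpos (show 1 ≤ 1 - s by linarith) hb]

lemma norm_besselJ_integral_le {b ν r : ℝ} (hb₁ : -1 < b) (hb₀ : b ≤ 0) (hbν : b ≤ ν - 1 / 2) :
    ‖∫ s in (-1 : ℝ)..1,
        Complex.exp (Complex.I * s * r) * (((1 - s ^ 2) ^ ((2 * ν - 1) / 2) : ℝ) : ℂ)‖ ≤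
      ∫ s in (-1 : ℝ)..1, ((1 - s) ^ b + (1 + s) ^ b) := by
  refine intervalIntegral.norm_integral_le_of_norm_le (by norm_num) ?_
    (intervalIntegrable_one_sub_rpow_add_one_add_rpow hb₁)
  filter_upwards [Measure.ae_ne volume 1] with s hs₁ hs
  have hs' : s ∈ Ioo (-1) 1 := ⟨hs.1, lt_of_le_of_ne hs.2 hs₁⟩
  have hpos : 0 < 1 - s ^ 2 := by nlinarith [hs'.1, hs'.2]
  rw [norm_mul, show Complex.I * s * r = ((s * r : ℝ) : ℂ) * Complex.I by push_cast; ring,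
    Complex.norm_exp_ofReal_mul_I, one_mul, Complex.norm_real,
    norm_of_nonneg (rpow_nonneg hpos.le _)]
  calc (1 - s ^ 2) ^ ((2 * ν - 1) / 2) ≤ (1 - s ^ 2) ^ b :=
        rpow_le_rpow_of_exponent_ge hpos (by nlinarith) (by linarith)
    _ ≤ (1 - s) ^ b + (1 + s) ^ b := one_sub_sq_rpow_le hb₀ hs'

lemma norm_besselJ_le {b ν z : ℝ} (hb₁ : -1 < b) (hb₀ : b ≤ 0) (hbν : b ≤ ν - 1 / 2)
    (hz : 0 ≤ z) :
    ‖besselJ ν z‖ ≤ 6 * (∫ s in (-1 : ℝ)..1, ((1 - s) ^ b + (1 + s) ^ b)) * (z / 2) ^ ν := by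
  have hp : 0 ≤ (z / 2) ^ ν := rpow_nonneg (by positivity) _
  have hG : 0 < Gamma (ν + 1 / 2) * Gamma (1 / 2) :=
    mul_pos (Gamma_pos_of_pos (by linarith)) (Gamma_pos_of_pos one_half_pos)
  have hΓ : 1 ≤ 6 * (Gamma (ν + 1 / 2) * Gamma (1 / 2)) := by
    have h₁ := inv_six_le_Gamma (show 0 < ν + 1 / 2 by linarith)
    have h₂ : 1 ≤ Gamma (1 / 2) := by
      rw [Gamma_one_half_eq, one_le_sqrt]
      linarith [pi_gt_three]
    nlinarith
  have hcoef : (z / 2) ^ ν / (Gamma (ν + 1 / 2) * Gamma (1 / 2)) ≤ 6 * (z / 2) ^ ν := by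
    rw [div_le_iff₀ hG]
    nlinarith
  rw [besselJ, norm_mul, Complex.norm_real, norm_of_nonneg (div_nonneg hp hG.le)]
  calc _ ≤ 6 * (z / 2) ^ ν * ∫ s in (-1 : ℝ)..1, ((1 - s) ^ b + (1 + s) ^ b) :=
        mul_le_mul hcoef (norm_besselJ_integral_le hb₁ hb₀ hbν) (norm_nonneg _) (by positivity)
    _ = _ := by ring

lemma exists_norm_besselJ_le {ν₀ : ℝ} (hν₀ : 0 < ν₀) :
    ∃ B, 0 ≤ B ∧ ∀ ν, ν₀ ≤ ν → ∀ z, 0 ≤ z → ‖besselJ ν z‖ ≤ B * (z / 2) ^ ν := by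
  set b := min ν₀ (1 / 2) - 1 / 2 with hb
  have hb₁ : -1 < b := by have := lt_min hν₀ one_half_pos; linarith
  have hb₀ : b ≤ 0 := by have := min_le_right ν₀ (1 / 2); linarith
  refine ⟨6 * ∫ s in (-1 : ℝ)..1, ((1 - s) ^ b + (1 + s) ^ b), ?_, fun ν hν z hz =>
    norm_besselJ_le hb₁ hb₀ (by have := min_le_left ν₀ (1 / 2); linarith) hz⟩
  refine mul_nonneg (by norm_num) (intervalIntegral.integral_nonneg (by norm_num) fun s hs => ?_)
  have : 0 ≤ (1 - s) ^ b := rpow_nonneg (by linarith [hs.2]) _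
  have : 0 ≤ (1 + s) ^ b := rpow_nonneg (by linarith [hs.1]) _
  positivity

lemma pow_le_factorial_div_log_pow_mul_rpow (N : ℕ) {b t : ℝ} (hb : 1 < b) (ht : 0 ≤ t) :
    t ^ N ≤ N ! / log b ^ N * b ^ t := by
  have hlog : 0 < log b := log_pos hb
  have h := pow_div_factorial_le_exp _ (mul_nonneg hlog.le ht) N
  rw [← rpow_def_of_pos (by linarith), mul_pow, div_le_iff₀ (by positivity)] at h
  rw [div_mul_eq_mul_div, le_div_iff₀ (by positivity)]
  linarith

lemma one_add_sq_rpow_half_le_one_add_pow {p t : ℝ} {m : ℕ} (hp : 0 ≤ p) (hpm : p ≤ m)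
    (ht : 0 ≤ t) : (1 + t ^ 2) ^ (p / 2) ≤ (1 + t) ^ m :=
  calc (1 + t ^ 2) ^ (p / 2) ≤ ((1 + t) ^ 2) ^ (p / 2) :=
        rpow_le_rpow (by positivity) (by nlinarith) (by positivity)
    _ = (1 + t) ^ p := by
        rw [← rpow_natCast, ← rpow_mul (by positivity)]
        ring_nf
    _ ≤ (1 + t) ^ (m : ℝ) := rpow_le_rpow_of_exponent_le (by linarith) hpm
    _ = (1 + t) ^ m := rpow_natCast _ _

lemma sq_le_div_pow_of_mul_rpow_le {N : ℕ} (hN : 0 < N) {c x ν : ℝ} (hc : 0 < c) (hx : 0 ≤ x)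
    (h : c * (1 + x) ^ (1 / (N : ℝ)) ≤ ν) : x ^ 2 ≤ (ν / c) ^ (2 * N) :=
  calc x ^ 2 ≤ ((1 + x) ^ (1 / (N : ℝ))) ^ (2 * N) := by
        have hN' : (N : ℝ) ≠ 0 := by positivity
        rw [← rpow_natCast _ (2 * N), ← rpow_mul (by positivity),
          show 1 / (N : ℝ) * ((2 * N : ℕ) : ℝ) = 2 by push_cast; field_simp, rpow_two]
        nlinarith
    _ ≤ (ν / c) ^ (2 * N) :=
        pow_le_pow_left₀ (by positivity) ((le_div_iff₀' hc).2 h) _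

lemma one_add_sq_rpow_div_two_rpow_le_mul_inv_sq {N m : ℕ} (hN : 0 < N) {p c x ν : ℝ}
    (hp : 0 ≤ p) (hpm : p ≤ m) (hc : 0 < c) (hx : 0 < x)
    (h : c * (1 + x) ^ (1 / (N : ℝ)) ≤ ν) :
    (1 + ν ^ 2) ^ (p / 2) / 2 ^ ν ≤
      2 * (m + 2 * N)! / log 2 ^ (m + 2 * N) / c ^ (2 * N) * (x ^ 2)⁻¹ := by
  have hν : 0 ≤ ν := le_trans (by positivity) h
  have hx2 : x ^ 2 ≤ ((1 + ν) / c) ^ (2 * N) :=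
    (sq_le_div_pow_of_mul_rpow_le hN hc hx.le h).trans (by gcongr; linarith)
  have hpow := pow_le_factorial_div_log_pow_mul_rpow (m + 2 * N) one_lt_two
    (show 0 ≤ 1 + ν by linarith)
  rw [rpow_add two_pos, rpow_one] at hpow
  rw [← div_eq_mul_inv, le_div_iff₀ (by positivity)]
  calc (1 + ν ^ 2) ^ (p / 2) / 2 ^ ν * x ^ 2 ≤ (1 + ν) ^ m / 2 ^ ν * ((1 + ν) / c) ^ (2 * N) := by
        gcongr
        exact one_add_sq_rpow_half_le_one_add_pow hp hpm hν
    _ = (1 + ν) ^ (m + 2 * N) / 2 ^ ν / c ^ (2 * N) := by rw [div_pow, pow_add]; ring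
    _ ≤ (m + 2 * N)! / log 2 ^ (m + 2 * N) * (2 * 2 ^ ν) / 2 ^ ν / c ^ (2 * N) := by gcongr
    _ = 2 * (m + 2 * N)! / log 2 ^ (m + 2 * N) / c ^ (2 * N) := by field_simp

lemma summable_and_tsum_le_of_le_mul_inv_sq {f : ℕ+ → ℝ} {C : ℝ} (h₀ : ∀ k, 0 ≤ f k)
    (h : ∀ k, f k ≤ C * ((k : ℝ) ^ 2)⁻¹) :
    Summable f ∧ ∑' k, f k ≤ C * ∑' k : ℕ+, ((k : ℝ) ^ 2)⁻¹ := by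
  have hsum : Summable fun k : ℕ+ => C * ((k : ℝ) ^ 2)⁻¹ :=
    ((summable_nat_pow_inv.2 one_lt_two).comp_injective PNat.coe_injective).mul_left C
  have hf : Summable f := hsum.of_nonneg_of_le h₀ h
  exact ⟨hf, (hf.tsum_le_tsum h hsum).trans_eq tsum_mul_left⟩

/-- Summation of the angular modes in the small-argument regime: if
`ν_k ≥ ν₀ > 0`, `ν_k ≥ c(1+k)^{1/(n−1)}` and `0 ≤ a_k ≤ C₀(1+ν_k²)^{(n−2)/2}` for all `k ≥ 1`,
then there is `C = C(n,ν₀,c,C₀)` such that `Σ_{k≥1} a_k |J_{ν_k}(z)| ≤ C z^{ν₀}`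
for all `0 < z ≤ 1`. -/
theorem bessel_mode_summation (n : ℕ) (hn : 3 ≤ n)
    (ν₀ c C₀ : ℝ) (hν₀ : 0 < ν₀) (hc : 0 < c) (hC₀ : 0 < C₀) :
    ∃ C : ℝ, 0 < C ∧ ∀ (ν a : ℕ+ → ℝ),
      (∀ k : ℕ+, ν₀ ≤ ν k) →
      (∀ k : ℕ+, c * (1 + (k : ℝ)) ^ ((1 : ℝ) / ((n : ℝ) - 1)) ≤ ν k) →
      (∀ k : ℕ+, 0 ≤ a k) →
      (∀ k : ℕ+, a k ≤ C₀ * (1 + (ν k) ^ 2) ^ (((n : ℝ) - 2) / 2)) →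
      ∀ z : ℝ, 0 < z → z ≤ 1 →
        Summable (fun k : ℕ+ => a k * ‖besselJ (ν k) z‖) ∧
        (∑' k : ℕ+, a k * ‖besselJ (ν k) z‖) ≤ C * z ^ ν₀ := by
  obtain ⟨B, hB₀, hB⟩ := exists_norm_besselJ_le hν₀
  have hn₁ : (n : ℝ) - 1 = ((n - 1 : ℕ) : ℝ) := by rw [Nat.cast_sub (by omega)]; norm_num
  set E := 2 * (n + 2 * (n - 1))! / log 2 ^ (n + 2 * (n - 1)) / c ^ (2 * (n - 1))
  set S := ∑' k : ℕ+, ((k : ℝ) ^ 2)⁻¹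
  refine ⟨max 1 (C₀ * B * E * S), by positivity, fun ν a hν hνk ha₀ ha z hz hz₁ => ?_⟩
  have hterm (k : ℕ+) : a k * ‖besselJ (ν k) z‖ ≤ C₀ * B * E * z ^ ν₀ * ((k : ℝ) ^ 2)⁻¹ := by
    have hn' : (3 : ℝ) ≤ n := by exact_mod_cast hn
    have hweight := one_add_sq_rpow_div_two_rpow_le_mul_inv_sq (p := (n : ℝ) - 2) (m := n)
      (by omega) (by linarith) (by linarith) hc (by positivity) (hn₁ ▸ hνk k)
    have hzν : z ^ ν k ≤ z ^ ν₀ := rpow_le_rpow_of_exponent_ge hz hz₁ (hν k)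
    calc a k * ‖besselJ (ν k) z‖
        ≤ C₀ * (1 + ν k ^ 2) ^ (((n : ℝ) - 2) / 2) * (B * (z / 2) ^ ν k) :=
          mul_le_mul (ha k) (hB _ (hν k) z hz.le) (norm_nonneg _) ((ha₀ k).trans (ha k))
      _ = C₀ * B * z ^ ν k * ((1 + ν k ^ 2) ^ (((n : ℝ) - 2) / 2) / 2 ^ ν k) := by
          rw [div_rpow hz.le zero_le_two]; ring
      _ ≤ C₀ * B * z ^ ν₀ * (E * ((k : ℝ) ^ 2)⁻¹) := by gcongr
      _ = C₀ * B * E * z ^ ν₀ * ((k : ℝ) ^ 2)⁻¹ := by ring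
  obtain ⟨hsum, hle⟩ := summable_and_tsum_le_of_le_mul_inv_sq
    (fun k => mul_nonneg (ha₀ k) (norm_nonneg _)) hterm
  refine ⟨hsum, hle.trans ?_⟩
  calc C₀ * B * E * z ^ ν₀ * S = C₀ * B * E * S * z ^ ν₀ := by ring
    _ ≤ max 1 (C₀ * B * E * S) * z ^ ν₀ := by gcongr; exact le_max_right _ _
end
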